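/- arXiv:2109.06145 — 2 statements merged into one kernel-verified Lean document; each statement's English description precedes it below -/
import Mathlib

section
/- Let G be a finite group, N an abelian normal subgroup of G, and B : N → N → ℂˣ a G-invariant alternating bicharacter. Let a, b ∈ N, let α be a finite-dimensional complex representation of Z_a with χ_α(h) = B(a,h)·(dim α) for all h ∈ N, and let β be a finite-dimensional complex representation of Z_b with χ_β(h) = B(b,h)·(dim β) for all h ∈ N. Then (i) the set G(a,b) = {g ∈ G | a·(gbg⁻¹) = (gbg⁻¹)·a} is all of G, and (ii) the S-matrix entry S_{(a,α),(b,β)} := (|G|/(|Z_a|·|Z_b|)) · Σ_{g ∈ G(a,b)} conj(χ_α(gbg⁻¹)) · conj(χ_β(g⁻¹ag)) equals |C_a|·(dim α)·|C_b|·(dim β), where C_a and C_b are the conjugacy classes of a and b. -/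
/-!
Since `N` is abelian and normal, `g b g⁻¹ ∈ N` commutes with `a` for every `g`, so the sum runs
over all of `G`. On `N` the characters are `dim α · B(a, ·)` and `dim β · B(b, ·)`, and
`G`-invariance of `B` turns `B(b, g⁻¹ a g)` into `B(g b g⁻¹, a)`; as `B` is an alternating
bicharacter, `B(x, y) B(y, x) = B(xy, xy) = 1`, so every summand equals `dim α · dim β`. The
prefactor then becomes `|C_a| |C_b|` by the orbit-stabilizer theorem `|G| = |C_x| |Z_x|`.
-/

open scoped Classical

/-- The character of a representation `α` of the centralizer of `a`, extended by zero
to a function on all of `G`. -/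
noncomputable def chiExt {G V : Type*} [Group G] [AddCommGroup V] [Module ℂ V]
    (a : G) (α : Representation ℂ (Subgroup.centralizer {a}) V) (x : G) : ℂ :=
  if hx : x ∈ Subgroup.centralizer {a} then LinearMap.trace ℂ V (α ⟨x, hx⟩) else 0

theorem nat_card_isConj_mul_nat_card_centralizer {G : Type*} [Group G] (a : G) :
    Nat.card {x : G | IsConj a x} * Nat.card (Subgroup.centralizer {a}) = Nat.card G := by
  have horbit : {x : G | IsConj a x} = MulAction.orbit (ConjAct G) a := by
    ext x
    simp only [Set.mem_ofPred_eq, ConjAct.mem_orbit_conjAct, isConj_comm]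
  rw [horbit, Subgroup.nat_card_centralizer_nat_card_stabilizer, Nat.card_coe_set_eq,
    ← MulAction.index_stabilizer, mul_comm, Subgroup.card_mul_index]
  rfl

theorem div_mul_card_eq_card_isConj_mul_card_isConj {K G : Type*} [Field K] [CharZero K]
    [Group G] [Finite G] (a b : G) :
    (Nat.card G : K) / ((Nat.card (Subgroup.centralizer {a}) : K) *
        (Nat.card (Subgroup.centralizer {b}) : K)) * Nat.card G =
      Nat.card {x : G | IsConj a x} * Nat.card {x : G | IsConj b x} := by
  have hZa : (Nat.card (Subgroup.centralizer {a}) : K) ≠ 0 :=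
    Nat.cast_ne_zero.mpr Nat.card_pos.ne'
  have hZb : (Nat.card (Subgroup.centralizer {b}) : K) ≠ 0 :=
    Nat.cast_ne_zero.mpr Nat.card_pos.ne'
  have hA : (Nat.card G : K) =
      Nat.card {x : G | IsConj a x} * Nat.card (Subgroup.centralizer {a}) := by
    exact_mod_cast (nat_card_isConj_mul_nat_card_centralizer a).symm
  have hB : (Nat.card G : K) =
      Nat.card {x : G | IsConj b x} * Nat.card (Subgroup.centralizer {b}) := by
    exact_mod_cast (nat_card_isConj_mul_nat_card_centralizer b).symm
  field_simp
  linear_combination (Nat.card G : K) * hA +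
    (Nat.card {x : G | IsConj a x} * Nat.card (Subgroup.centralizer {a}) : K) * hB

theorem mul_swap_eq_one_of_alternating {M A : Type*} [Mul M] [CommMonoid A] {B : M → M → A}
    (hB1 : ∀ x y z, B (x * y) z = B x z * B y z) (hB2 : ∀ x y z, B x (y * z) = B x y * B x z)
    (hB3 : ∀ x, B x x = 1) (x y : M) : B x y * B y x = 1 := by
  have h := hB3 (x * y)
  rwa [hB1, hB2, hB2, hB3, hB3, one_mul, mul_one] at h

theorem conj_chiExt_mul_conj_chiExt_eq_finrank_mul_finrank {G : Type*} [Group G]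
    {N : Subgroup G} (hN : N.Normal) {B : ↥N → ↥N → ℂˣ}
    (hB1 : ∀ h₁ h₂ h : ↥N, B (h₁ * h₂) h = B h₁ h * B h₂ h)
    (hB2 : ∀ h h₁ h₂ : ↥N, B h (h₁ * h₂) = B h h₁ * B h h₂)
    (hB3 : ∀ h : ↥N, B h h = 1)
    (hBinv : ∀ (g : G) (h₁ h₂ : ↥N),
      B ⟨g * (h₁ : G) * g⁻¹, hN.conj_mem (h₁ : G) h₁.2 g⟩
        ⟨g * (h₂ : G) * g⁻¹, hN.conj_mem (h₂ : G) h₂.2 g⟩ = B h₁ h₂)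
    {V W : Type*} [AddCommGroup V] [Module ℂ V] [AddCommGroup W] [Module ℂ W]
    {a b : G} (ha : a ∈ N) (hb : b ∈ N)
    {α : Representation ℂ (Subgroup.centralizer {a}) V}
    {β : Representation ℂ (Subgroup.centralizer {b}) W}
    (hχα : ∀ h : ↥N, chiExt a α (h : G) = (B ⟨a, ha⟩ h : ℂ) * (Module.finrank ℂ V : ℂ))
    (hχβ : ∀ h : ↥N, chiExt b β (h : G) = (B ⟨b, hb⟩ h : ℂ) * (Module.finrank ℂ W : ℂ))
    (g : G) :
    starRingEnd ℂ (chiExt a α (g * b * g⁻¹)) * starRingEnd ℂ (chiExt b β (g⁻¹ * a * g)) =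
      Module.finrank ℂ V * Module.finrank ℂ W := by
  set c : ↥N := ⟨g * b * g⁻¹, hN.conj_mem b hb g⟩
  set d : ↥N := ⟨g⁻¹ * a * g, by simpa using hN.conj_mem a ha g⁻¹⟩
  -- conjugation by `g` carries the pair `(b, g⁻¹ a g)` to `(g b g⁻¹, a)`
  have hswap : B ⟨b, hb⟩ d = B c ⟨a, ha⟩ := by
    rw [← hBinv g]
    congr
    simp only [d]
    group
  have hinv : B ⟨a, ha⟩ c * B c ⟨a, ha⟩ = 1 := mul_swap_eq_one_of_alternating hB1 hB2 hB3 _ _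
  rw [show g * b * g⁻¹ = (c : G) from rfl, show g⁻¹ * a * g = (d : G) from rfl,
    hχα, hχβ, hswap]
  calc _ = starRingEnd ℂ ((B ⟨a, ha⟩ c * B c ⟨a, ha⟩ : ℂˣ) : ℂ) *
          (Module.finrank ℂ V * Module.finrank ℂ W) := by
        simp only [map_mul, Units.val_mul, Complex.conj_natCast]
        ring
    _ = Module.finrank ℂ V * Module.finrank ℂ W := by
        rw [hinv, Units.val_one, map_one, one_mul]

theorem smatrix_eq_dims_general {G : Type*} [Group G] [Fintype G]
    (N : Subgroup G) (hN : N.Normal) (hcomm : ∀ x ∈ N, ∀ y ∈ N, x * y = y * x)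
    (B : ↥N → ↥N → ℂˣ)
    (hB1 : ∀ h₁ h₂ h : ↥N, B (h₁ * h₂) h = B h₁ h * B h₂ h)
    (hB2 : ∀ h h₁ h₂ : ↥N, B h (h₁ * h₂) = B h h₁ * B h h₂)
    (hB3 : ∀ h : ↥N, B h h = 1)
    (hBinv : ∀ (g : G) (h₁ h₂ : ↥N),
      B ⟨g * (h₁ : G) * g⁻¹, hN.conj_mem (h₁ : G) h₁.2 g⟩
        ⟨g * (h₂ : G) * g⁻¹, hN.conj_mem (h₂ : G) h₂.2 g⟩ = B h₁ h₂)
    {V W : Type*} [AddCommGroup V] [Module ℂ V]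
    [AddCommGroup W] [Module ℂ W]
    (a b : G) (ha : a ∈ N) (hb : b ∈ N)
    (α : Representation ℂ (Subgroup.centralizer {a}) V)
    (β : Representation ℂ (Subgroup.centralizer {b}) W)
    (hχα : ∀ h : ↥N, chiExt a α (h : G) = (B ⟨a, ha⟩ h : ℂ) * (Module.finrank ℂ V : ℂ))
    (hχβ : ∀ h : ↥N, chiExt b β (h : G) = (B ⟨b, hb⟩ h : ℂ) * (Module.finrank ℂ W : ℂ)) :
    {g : G | a * (g * b * g⁻¹) = (g * b * g⁻¹) * a} = Set.univ ∧
    ((Fintype.card G : ℂ) /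
        ((Nat.card (Subgroup.centralizer {a} : Subgroup G) : ℂ) *
          (Nat.card (Subgroup.centralizer {b} : Subgroup G) : ℂ))) *
      ∑ g ∈ Finset.univ.filter (fun g : G => a * (g * b * g⁻¹) = (g * b * g⁻¹) * a),
        (starRingEnd ℂ) (chiExt a α (g * b * g⁻¹)) * (starRingEnd ℂ) (chiExt b β (g⁻¹ * a * g)) =
      (Nat.card {x : G | IsConj a x} : ℂ) * (Module.finrank ℂ V : ℂ) *
        ((Nat.card {x : G | IsConj b x} : ℂ) * (Module.finrank ℂ W : ℂ)) := by
  have hcommute : ∀ g : G, a * (g * b * g⁻¹) = (g * b * g⁻¹) * a :=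
    fun g => hcomm a ha _ (hN.conj_mem b hb g)
  refine ⟨Set.eq_univ_of_forall hcommute, ?_⟩
  rw [Finset.filter_true_of_mem fun g _ => hcommute g,
    Finset.sum_congr rfl fun g _ =>
      conj_chiExt_mul_conj_chiExt_eq_finrank_mul_finrank hN hB1 hB2 hB3 hBinv ha hb hχα hχβ g,
    Finset.sum_const, Finset.card_univ, nsmul_eq_mul, Fintype.card_eq_nat_card]
  linear_combination (Module.finrank ℂ V * Module.finrank ℂ W : ℂ) *
    div_mul_card_eq_card_isConj_mul_card_isConj (K := ℂ) a b

/-- in the situation of a `G`-invariant alternating bicharacter `B` on an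
abelian normal subgroup `N` of a finite group `G`, with `a, b ∈ N` and representations
`α` of `Z_a`, `β` of `Z_b` whose characters restrict on `N` to `B(a,·)·dim α` resp.
`B(b,·)·dim β`:
(i) the set `G(a,b) = {g | a·(g b g⁻¹) = (g b g⁻¹)·a}` is all of `G`, and
(ii) the S-matrix entry `(|G|/(|Z_a|·|Z_b|)) · Σ_{g ∈ G(a,b)} conj χ_α(g b g⁻¹) · conj χ_β(g⁻¹ a g)`
equals `|C_a|·dim α · |C_b|·dim β`. -/
theorem smatrix_eq_dims {G : Type*} [Group G] [Fintype G]
    (N : Subgroup G) (hN : N.Normal) (hcomm : ∀ x ∈ N, ∀ y ∈ N, x * y = y * x)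
    (B : ↥N → ↥N → ℂˣ)
    (hB1 : ∀ h₁ h₂ h : ↥N, B (h₁ * h₂) h = B h₁ h * B h₂ h)
    (hB2 : ∀ h h₁ h₂ : ↥N, B h (h₁ * h₂) = B h h₁ * B h h₂)
    (hB3 : ∀ h : ↥N, B h h = 1)
    (hBinv : ∀ (g : G) (h₁ h₂ : ↥N),
      B ⟨g * (h₁ : G) * g⁻¹, hN.conj_mem (h₁ : G) h₁.2 g⟩
        ⟨g * (h₂ : G) * g⁻¹, hN.conj_mem (h₂ : G) h₂.2 g⟩ = B h₁ h₂)
    {V W : Type*} [AddCommGroup V] [Module ℂ V] [FiniteDimensional ℂ V]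
    [AddCommGroup W] [Module ℂ W] [FiniteDimensional ℂ W]
    (a b : G) (ha : a ∈ N) (hb : b ∈ N)
    (α : Representation ℂ (Subgroup.centralizer {a}) V)
    (β : Representation ℂ (Subgroup.centralizer {b}) W)
    (hχα : ∀ h : ↥N, chiExt a α (h : G) = (B ⟨a, ha⟩ h : ℂ) * (Module.finrank ℂ V : ℂ))
    (hχβ : ∀ h : ↥N, chiExt b β (h : G) = (B ⟨b, hb⟩ h : ℂ) * (Module.finrank ℂ W : ℂ)) :
    {g : G | a * (g * b * g⁻¹) = (g * b * g⁻¹) * a} = Set.univ ∧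
    ((Fintype.card G : ℂ) /
        ((Nat.card (Subgroup.centralizer {a} : Subgroup G) : ℂ) *
          (Nat.card (Subgroup.centralizer {b} : Subgroup G) : ℂ))) *
      ∑ g ∈ Finset.univ.filter (fun g : G => a * (g * b * g⁻¹) = (g * b * g⁻¹) * a),
        (starRingEnd ℂ) (chiExt a α (g * b * g⁻¹)) * (starRingEnd ℂ) (chiExt b β (g⁻¹ * a * g)) =
      (Nat.card {x : G | IsConj a x} : ℂ) * (Module.finrank ℂ V : ℂ) *
        ((Nat.card {x : G | IsConj b x} : ℂ) * (Module.finrank ℂ W : ℂ)) :=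
  smatrix_eq_dims_general N hN hcomm B hB1 hB2 hB3 hBinv a b ha hb α β hχα hχβ
end

section
/- In the double semion condensation model, every coherent state is a simultaneous eigenvector of the creation operators: for all parameters g₀ ∈ ZMod 2 and h, g : Fin N → ZMod 2, and every n, W_n(e) ψ'_{g₀;h,g} = (−1)^{g₀ + g_n} ψ'_{g₀;h,g}, the exponent computed modulo 2. -/
/-- The effective Hilbert space of the double semion condensation model with `N` anyon
sites: functions from (condensate label, per-site (charge, flux)) to `ℂ`. -/
abbrev Hsp (N : ℕ) : Type := (ZMod 2 × (Fin N → ZMod 2 × ZMod 2)) → ℂ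

/-- The creation operator `W_n(e)`. -/
noncomputable def wOp (N : ℕ) (n : Fin N) : Hsp N →ₗ[ℂ] Hsp N :=
  LinearMap.funLeft ℂ ℂ
    (fun p => (p.1 + 1, Function.update p.2 n ((p.2 n).1 + 1, (p.2 n).2)))

/-- The double semion coherent state `ψ'_{g₀;h,g}`:
`ψ'(a,j) = 2^{−(N+1)/2} · (−1)^{g₀·a} · ∏_n (if φ_n = h_n then (−1)^{g_n·c_n}·i^{g_n·h_n} else 0)`. -/
noncomputable def cohDS (N : ℕ) (g0 : ZMod 2) (h g : Fin N → ZMod 2) : Hsp N :=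
  fun p => (((2 : ℝ) ^ (-(((N : ℝ) + 1) / 2)) : ℝ) : ℂ) *
    (-1 : ℂ) ^ (g0.val * p.1.val) *
    ∏ n : Fin N,
      (if (p.2 n).2 = h n then
        (-1 : ℂ) ^ ((g n).val * ((p.2 n).1).val) * Complex.I ^ ((g n).val * (h n).val)
      else 0)

lemma zmod2_cases (x : ZMod 2) : x = 0 ∨ x = 1 := by revert x; decide

lemma zmod2_val_one : (1 : ZMod 2).val = 1 := rfl

lemma zmod2_val_two : (2 : ZMod 2).val = 0 := rfl

lemma zmod2_one_add_one : (1 + 1 : ZMod 2) = 0 := rfl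

/-- in the double semion condensation model, every coherent state is a
simultaneous eigenvector of the creation operators:
`W_n(e) ψ'_{g₀;h,g} = (−1)^{g₀+g_n} ψ'_{g₀;h,g}`. -/
theorem wOp_cohDS_eigen (N : ℕ) (hN : 1 ≤ N)
    (g0 : ZMod 2) (h g : Fin N → ZMod 2) (n : Fin N) :
    wOp N n (cohDS N g0 h g) = ((-1 : ℂ) ^ ((g0 + g n).val)) • cohDS N g0 h g := by
  funext p
  obtain ⟨a, j⟩ := p
  simp only [wOp, cohDS, LinearMap.funLeft_apply, Pi.smul_apply, smul_eq_mul]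
  rw [← Finset.mul_prod_erase Finset.univ _ (Finset.mem_univ n),
      ← Finset.mul_prod_erase Finset.univ
        (fun m => if (j m).2 = h m then
          (-1 : ℂ) ^ ((g m).val * ((j m).1).val) * Complex.I ^ ((g m).val * (h m).val)
        else 0) (Finset.mem_univ n)]
  have hrest : ∀ m ∈ Finset.univ.erase n,
      (if ((Function.update j n ((j n).1 + 1, (j n).2)) m).2 = h m then
        (-1 : ℂ) ^ ((g m).val * (((Function.update j n ((j n).1 + 1, (j n).2)) m).1).val) *
          Complex.I ^ ((g m).val * (h m).val) else 0)
      = (if (j m).2 = h m then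
        (-1 : ℂ) ^ ((g m).val * ((j m).1).val) * Complex.I ^ ((g m).val * (h m).val) else 0) := by
    intro m hm
    rw [Function.update_of_ne (Finset.ne_of_mem_erase hm)]
  rw [Finset.prod_congr rfl hrest]
  simp only [Function.update_self]
  set C : ℂ := (((2 : ℝ) ^ (-(((N : ℝ) + 1) / 2)) : ℝ) : ℂ)
  set P : ℂ := ∏ m ∈ Finset.univ.erase n,
      (if (j m).2 = h m then
        (-1 : ℂ) ^ ((g m).val * ((j m).1).val) * Complex.I ^ ((g m).val * (h m).val) else 0)
  rcases zmod2_cases g0 with h0 | h0 <;>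
  rcases zmod2_cases a with ha | ha <;>
  rcases zmod2_cases (g n) with hg | hg <;>
  rcases zmod2_cases ((j n).1) with hc | hc <;>
  rcases zmod2_cases (h n) with hh | hh <;>
  · by_cases hφ : (j n).2 = h n <;>
      simp [hφ, h0, ha, hg, hc, hh, zmod2_val_one, zmod2_val_two, zmod2_one_add_one] <;> ring
end
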